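/- arXiv:1105.6170 — 2 statements merged into one kernel-verified Lean document; each statement's English description precedes it below -/
import Mathlib

section
/- Define, for positive integers M, N, k, a positive real β, and integer 1 ≤ p ≤ M, B(p) = ∑_{r=1}^{M-p+1} ((βp/k)^r / (1+βp/k)^{r+(N-1)k-1}) · (r+(N-1)k-1)!/(r!((N-1)k-1)!). Then for all 1 ≤ p ≤ M-1, B(p)/B(p+1) ≥ ((k+β(p+1))/(k+βp))^{(N-1)k-1} · ((β/k)/(1+β/k))^{M-p+1}. -/
/-! Write `B(p)` as `(1 + a)^{-m} ∑ C_r (a/(1+a))^r` with `a = βp/k` and `m = (N-1)k - 1`.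
Since `t ↦ t/(1+t)` is increasing with values in `[0,1)`, each term of `B(p)` is at least
`(1+a)^{-m} C_r (c/(1+c))^{M-p+1}` with `c = β/k ≤ a`, while each term of `B(p+1)` is at most
`(1+b)^{-m} C_r`, `b = β(p+1)/k`; the index range of `B(p+1)` is contained in that of `B(p)`,
so comparing the two sums termwise gives the bound. -/

open Finset

lemma pow_div_one_add_pow_add (x : ℝ) (r m : ℕ) :
    x ^ r / (1 + x) ^ (r + m) = (x / (1 + x)) ^ r / (1 + x) ^ m := by
  rw [div_pow, pow_add, div_div]

lemma div_one_add_self_le_one {x : ℝ} (hx : 0 ≤ x) : x / (1 + x) ≤ 1 :=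
  (div_le_one (by positivity)).mpr (by linarith)

lemma div_one_add_self_le_div_one_add_self {c a : ℝ} (hc : 0 ≤ c) (hca : c ≤ a) :
    c / (1 + c) ≤ a / (1 + a) := by
  rw [div_le_div_iff₀ (by positivity) (by linarith)]
  linarith

section SumBounds

variable {m n : ℕ} {C : ℕ → ℝ}

lemma sum_pow_div_one_add_pow_le {b : ℝ} (hb : 0 ≤ b) {n₁ : ℕ} (hn : n₁ ≤ n)
    (hC : ∀ r, 0 ≤ C r) :
    ∑ r ∈ Icc 1 n₁, b ^ r / (1 + b) ^ (r + m) * C r ≤ (∑ r ∈ Icc 1 n, C r) / (1 + b) ^ m := by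
  rw [sum_div]
  calc ∑ r ∈ Icc 1 n₁, b ^ r / (1 + b) ^ (r + m) * C r
      ≤ ∑ r ∈ Icc 1 n₁, C r / (1 + b) ^ m := by
        refine sum_le_sum fun r _ => ?_
        rw [pow_div_one_add_pow_add, div_mul_eq_mul_div]
        gcongr
        exact mul_le_of_le_one_left (hC r) (pow_le_one₀ (by positivity)
          (div_one_add_self_le_one hb))
    _ ≤ ∑ r ∈ Icc 1 n, C r / (1 + b) ^ m :=
        sum_le_sum_of_subset_of_nonneg (Icc_subset_Icc_right hn)
          fun r _ _ => div_nonneg (hC r) (by positivity)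

lemma le_sum_pow_div_one_add_pow {a c : ℝ} (hc : 0 ≤ c) (hca : c ≤ a) (hC : ∀ r, 0 ≤ C r) :
    (c / (1 + c)) ^ n * (∑ r ∈ Icc 1 n, C r) / (1 + a) ^ m ≤
      ∑ r ∈ Icc 1 n, a ^ r / (1 + a) ^ (r + m) * C r := by
  rw [mul_sum, sum_div]
  refine sum_le_sum fun r hr => ?_
  have hpow : (c / (1 + c)) ^ n ≤ (a / (1 + a)) ^ r :=
    calc (c / (1 + c)) ^ n ≤ (c / (1 + c)) ^ r :=
          pow_le_pow_of_le_one (by positivity) (div_one_add_self_le_one hc) (mem_Icc.mp hr).2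
      _ ≤ (a / (1 + a)) ^ r :=
          pow_le_pow_left₀ (by positivity) (div_one_add_self_le_div_one_add_self hc hca) r
  rw [pow_div_one_add_pow_add, div_mul_eq_mul_div]
  have : 0 ≤ 1 + a := by linarith
  exact div_le_div_of_nonneg_right (mul_le_mul_of_nonneg_right hpow (hC r)) (by positivity)

lemma le_sum_div_sum_pow_div_one_add_pow {a b c : ℝ} (hb : 0 < b) (hc : 0 ≤ c) (hca : c ≤ a)
    {n₁ : ℕ} (hn₁ : 1 ≤ n₁) (hn : n₁ ≤ n) (hC : ∀ r, 0 < C r) :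
    ((1 + b) / (1 + a)) ^ m * (c / (1 + c)) ^ n ≤
      (∑ r ∈ Icc 1 n, a ^ r / (1 + a) ^ (r + m) * C r) /
        (∑ r ∈ Icc 1 n₁, b ^ r / (1 + b) ^ (r + m) * C r) := by
  have hden : 0 < ∑ r ∈ Icc 1 n₁, b ^ r / (1 + b) ^ (r + m) * C r :=
    sum_pos (fun r _ => by have := hC r; positivity) (nonempty_Icc.mpr hn₁)
  have hCnn : ∀ r, 0 ≤ C r := fun r => (hC r).le
  have : 0 < 1 + a := by linarith
  rw [le_div_iff₀ hden]
  calc ((1 + b) / (1 + a)) ^ m * (c / (1 + c)) ^ n *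
        ∑ r ∈ Icc 1 n₁, b ^ r / (1 + b) ^ (r + m) * C r
      ≤ ((1 + b) / (1 + a)) ^ m * (c / (1 + c)) ^ n *
          ((∑ r ∈ Icc 1 n, C r) / (1 + b) ^ m) :=
        mul_le_mul_of_nonneg_left (sum_pow_div_one_add_pow_le hb.le hn hCnn) (by positivity)
    _ = (c / (1 + c)) ^ n * (∑ r ∈ Icc 1 n, C r) / (1 + a) ^ m := by
        have : 0 < 1 + b := by linarith
        rw [div_pow]
        field_simp
    _ ≤ _ := le_sum_pow_div_one_add_pow hc hca hCnn

end SumBounds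

theorem stmt_7_general (M N k : ℕ) (hN : 2 ≤ N) (hk : 1 ≤ k) (β : ℝ) (hβ : 0 < β)
    (B : ℕ → ℝ)
    (hB : ∀ p, B p = ∑ r ∈ Finset.Icc 1 (M - p + 1),
      (β * p / k) ^ r / (1 + β * p / k) ^ (r + (N - 1) * k - 1) *
        ((r + (N - 1) * k - 1).factorial / (r.factorial * ((N - 1) * k - 1).factorial))) :
    ∀ p, 1 ≤ p → p ≤ M - 1 →
      B p / B (p + 1) ≥
        ((k + β * (p + 1)) / (k + β * p)) ^ ((N - 1) * k - 1) *
          ((β / k) / (1 + β / k)) ^ (M - p + 1) := by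
  intro p hp1 hpM
  set m := (N - 1) * k - 1
  set C : ℕ → ℝ := fun r => ((r + m).factorial : ℝ) / (r.factorial * m.factorial)
  have hkR : (0 : ℝ) < k := by exact_mod_cast hk
  have hpR : (1 : ℝ) ≤ p := by exact_mod_cast hp1
  have hsub : ∀ r, r + (N - 1) * k - 1 = r + m := fun r =>
    Nat.add_sub_assoc (Nat.one_le_iff_ne_zero.mpr (Nat.mul_ne_zero (by omega) (by omega))) r
  have hB' : ∀ q, B q = ∑ r ∈ Icc 1 (M - q + 1),
      (β * q / k) ^ r / (1 + β * q / k) ^ (r + m) * C r := fun q => by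
    simp only [hB, hsub, C]
  have hratio : ((k : ℝ) + β * (p + 1)) / (k + β * p) = (1 + β * (p + 1) / k) / (1 + β * p / k) := by
    field_simp
  have hrange : M - (p + 1) + 1 = M - p := by omega
  rw [hB' p, hB' (p + 1), hrange, hratio, ge_iff_le]
  push_cast
  exact le_sum_div_sum_pow_div_one_add_pow (by positivity) (by positivity)
    (div_le_div_of_nonneg_right (le_mul_of_one_le_right hβ.le hpR) hkR.le) (by omega) (by omega)
    fun r => by positivity

theorem stmt_7 (M N k : ℕ) (hM : 2 ≤ M) (hN : 2 ≤ N) (hk : 1 ≤ k) (β : ℝ) (hβ : 0 < β)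
    (B : ℕ → ℝ)
    (hB : ∀ p, B p = ∑ r ∈ Finset.Icc 1 (M - p + 1),
      (β * p / k) ^ r / (1 + β * p / k) ^ (r + (N - 1) * k - 1) *
        ((r + (N - 1) * k - 1).factorial / (r.factorial * ((N - 1) * k - 1).factorial))) :
    ∀ p, 1 ≤ p → p ≤ M - 1 →
      B p / B (p + 1) ≥
        ((k + β * (p + 1)) / (k + β * p)) ^ ((N - 1) * k - 1) *
          ((β / k) / (1 + β / k)) ^ (M - p + 1) :=
  stmt_7_general M N k hN hk β hβ B hB
end

section
/- With B(p) defined as in the ZF outage setting, for every integer 1 ≤ p ≤ M-1 there exists N₀ such that for all N ≥ N₀, B(p)/B(p+1) ≥ (p+1)/p; consequently p·B(p) ≥ (p+1)·B(p+1), i.e., p ↦ p·B(p) is decreasing for N large. -/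
/-!
Write `m = (N - 1) k - 1` and `x = βp/k`. Then `B(p)` is a sum of `M - p + 1` terms
`x^r (1+x)^{-(r+m)} C(r+m, r)`. Each term of `B(p+1)` is at most a polynomial in `m` times
`(1+y)^{-m}` with `y = β(p+1)/k > x`, while the first term of `B(p)` alone is
`≥ x (1+x)^{-(m+1)}`.
Since `(1+y)/(1+x) > 1`, the ratio `B(p+1)/B(p)` is dominated by a polynomial over an exponential,
so it tends to `0` as `N → ∞` and eventually drops below `p/(p+1)`.
-/

open Filter Finset Topology

/-- `B(p)` is `outageSum (β p / k) ((N - 1) k - 1) (M - p + 1)` once `N ≥ 2`. -/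
noncomputable def outageSum (x : ℝ) (m n : ℕ) : ℝ :=
  ∑ r ∈ Icc 1 n, x ^ r / (1 + x) ^ (r + m) * ((r + m).choose r : ℝ)

lemma div_one_add_pow_le_outageSum {x : ℝ} (hx : 0 ≤ x) (m : ℕ) {n : ℕ} (hn : 1 ≤ n) :
    x / (1 + x) ^ (m + 1) ≤ outageSum x m n := by
  have hfirst : x / (1 + x) ^ (m + 1) ≤ x ^ 1 / (1 + x) ^ (1 + m) * ((1 + m).choose 1 : ℝ) := by
    rw [pow_one, add_comm 1 m, Nat.choose_one_right]
    push_cast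
    exact le_mul_of_one_le_right (by positivity) (by linarith [(m.cast_nonneg : (0:ℝ) ≤ m)])
  exact hfirst.trans <|
    single_le_sum (f := fun r => x ^ r / (1 + x) ^ (r + m) * ((r + m).choose r : ℝ))
      (fun r _ => by positivity) (mem_Icc.2 ⟨le_rfl, hn⟩)

lemma outageSum_pos {x : ℝ} (hx : 0 < x) (m : ℕ) {n : ℕ} (hn : 1 ≤ n) :
    0 < outageSum x m n :=
  (div_pos hx (by positivity)).trans_le (div_one_add_pow_le_outageSum hx.le m hn)

lemma outageSum_le {y : ℝ} (hy : 0 ≤ y) (m n : ℕ) :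
    outageSum y m n ≤ n * ((m + n : ℝ) ^ n / (1 + y) ^ m) := by
  have hterm : ∀ r ∈ Icc 1 n,
      y ^ r / (1 + y) ^ (r + m) * ((r + m).choose r : ℝ) ≤ (m + n : ℝ) ^ n / (1 + y) ^ m := by
    intro r hr
    obtain ⟨hr1, hrn⟩ := mem_Icc.1 hr
    have hchoose : (r + m).choose r ≤ (m + n) ^ n :=
      calc (r + m).choose r ≤ (r + m) ^ r := Nat.choose_le_pow _ _
        _ ≤ (m + n) ^ r := Nat.pow_le_pow_left (by omega) _
        _ ≤ (m + n) ^ n := Nat.pow_le_pow_right (by omega) hrn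
    have hfrac : y ^ r / (1 + y) ^ (r + m) ≤ 1 / (1 + y) ^ m := by
      rw [pow_add, div_le_div_iff₀ (by positivity) (by positivity), one_mul]
      exact mul_le_mul_of_nonneg_right (pow_le_pow_left₀ hy (by linarith) r) (by positivity)
    calc y ^ r / (1 + y) ^ (r + m) * ((r + m).choose r : ℝ)
        ≤ 1 / (1 + y) ^ m * (m + n : ℝ) ^ n :=
          mul_le_mul hfrac (by exact_mod_cast hchoose) (by positivity) (by positivity)
      _ = (m + n : ℝ) ^ n / (1 + y) ^ m := by ring
  simpa [outageSum, Nat.card_Icc, nsmul_eq_mul] using sum_le_card_nsmul _ _ _ hterm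

lemma tendsto_add_pow_div_pow_atTop (n : ℕ) {q : ℝ} (hq : 1 < q) :
    Tendsto (fun m : ℕ => (m + n : ℝ) ^ n / q ^ m) atTop (𝓝 0) := by
  have hshift := (tendsto_pow_const_div_const_pow_of_one_lt n hq).comp (tendsto_add_atTop_nat n)
  have hq0 : q ≠ 0 := by positivity
  refine (mul_zero (q ^ n) ▸ hshift.const_mul (q ^ n)).congr fun m => ?_
  simp only [Function.comp_apply, Nat.cast_add, pow_add]
  field_simp

lemma tendsto_outageSum_div_outageSum {x y : ℝ} (hx : 0 < x) (hxy : x < y) (n : ℕ) {n' : ℕ}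
    (hn' : 1 ≤ n') :
    Tendsto (fun m => outageSum y m n / outageSum x m n') atTop (𝓝 0) := by
  have hy : 0 < y := hx.trans hxy
  set q := (1 + y) / (1 + x)
  have hq : 1 < q := (one_lt_div (by positivity)).2 (by linarith)
  have hbound : ∀ m : ℕ, outageSum y m n / outageSum x m n'
      ≤ n * (1 + x) / x * ((m + n : ℝ) ^ n / q ^ m) := by
    intro m
    have hlow := div_one_add_pow_le_outageSum hx.le m hn'
    calc outageSum y m n / outageSum x m n'
        ≤ n * ((m + n : ℝ) ^ n / (1 + y) ^ m) / (x / (1 + x) ^ (m + 1)) :=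
          div_le_div₀ (by positivity) (outageSum_le hy.le m n) (by positivity) hlow
      _ = n * (1 + x) / x * ((m + n : ℝ) ^ n / q ^ m) := by
          simp only [q, div_pow]
          field_simp
          ring
  refine squeeze_zero (fun m => ?_) hbound ?_
  · exact div_nonneg (by unfold outageSum; positivity) (outageSum_pos hx m hn').le
  · simpa using (tendsto_add_pow_div_pow_atTop n hq).const_mul (n * (1 + x) / x)

lemma tendsto_mul_sub_one_sub_one_atTop {k : ℕ} (hk : 1 ≤ k) :
    Tendsto (fun N : ℕ => (N - 1) * k - 1) atTop atTop :=
  tendsto_atTop_atTop.2 fun b => ⟨b + 2, fun N hN => by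
    have : N - 1 ≤ (N - 1) * k := Nat.le_mul_of_pos_right _ hk
    omega⟩

theorem stmt_8_general (M k : ℕ) (hk : 1 ≤ k) (β : ℝ) (hβ : 0 < β)
    (B : ℕ → ℕ → ℝ)
    (hB : ∀ N p, B N p = ∑ r ∈ Finset.Icc 1 (M - p + 1),
      (β * p / k) ^ r / (1 + β * p / k) ^ (r + (N - 1) * k - 1) *
        ((r + (N - 1) * k - 1).factorial / (r.factorial * ((N - 1) * k - 1).factorial))) :
    ∀ p : ℕ, 1 ≤ p → p ≤ M - 1 →
      ∃ N₀ : ℕ, ∀ N : ℕ, N₀ ≤ N →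
        B N p / B N (p + 1) ≥ (p + 1) / p ∧
          p * B N p ≥ (p + 1) * B N (p + 1) := by
  intro p hp _
  have hp0 : (0 : ℝ) < p := by exact_mod_cast hp
  have hk0 : (0 : ℝ) < k := by exact_mod_cast hk
  have hB_eq : ∀ N, 2 ≤ N → ∀ q,
      B N q = outageSum (β * q / k) ((N - 1) * k - 1) (M - q + 1) := by
    intro N hN q
    have hNk : 1 ≤ (N - 1) * k := Nat.one_le_iff_ne_zero.2 (mul_ne_zero (by omega) (by omega))
    refine (hB N q).trans (sum_congr rfl fun r _ => ?_)
    rw [show r + (N - 1) * k - 1 = r + ((N - 1) * k - 1) by omega, ← Nat.cast_add_choose]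
  have hx : 0 < β * p / k := by positivity
  have hxy : β * p / k < β * (p + 1 : ℕ) / k := by gcongr; simp
  have hratio : Tendsto (fun N => B N (p + 1) / B N p) atTop (𝓝 0) := by
    refine ((tendsto_outageSum_div_outageSum hx hxy (M - (p + 1) + 1) (n' := M - p + 1)
      (by omega)).comp (tendsto_mul_sub_one_sub_one_atTop hk)).congr' ?_
    filter_upwards [eventually_ge_atTop 2] with N hN
    simp [hB_eq N hN]
  obtain ⟨N₀, hN₀⟩ := eventually_atTop.1 <| (hratio.eventually (ge_mem_nhds
    (show (0 : ℝ) < p / (p + 1) by positivity))).and (eventually_ge_atTop 2)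
  refine ⟨N₀, fun N hN => ?_⟩
  obtain ⟨hle, hN2⟩ := hN₀ N hN
  have hpos : ∀ q, 1 ≤ q → 0 < B N q := fun q hq => by
    have : (0 : ℝ) < q := by exact_mod_cast hq
    rw [hB_eq N hN2]
    exact outageSum_pos (by positivity) _ (by omega)
  rw [div_le_div_iff₀ (hpos p hp) (by positivity)] at hle
  refine ⟨?_, by linarith⟩
  rw [ge_iff_le, div_le_div_iff₀ hp0 (hpos (p + 1) (by omega))]
  linarith

theorem stmt_8 (M k : ℕ) (hM : 2 ≤ M) (hk : 1 ≤ k) (β : ℝ) (hβ : 0 < β)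
    (B : ℕ → ℕ → ℝ)
    (hB : ∀ N p, B N p = ∑ r ∈ Finset.Icc 1 (M - p + 1),
      (β * p / k) ^ r / (1 + β * p / k) ^ (r + (N - 1) * k - 1) *
        ((r + (N - 1) * k - 1).factorial / (r.factorial * ((N - 1) * k - 1).factorial))) :
    ∀ p : ℕ, 1 ≤ p → p ≤ M - 1 →
      ∃ N₀ : ℕ, ∀ N : ℕ, N₀ ≤ N →
        B N p / B N (p + 1) ≥ (p + 1) / p ∧
          p * B N p ≥ (p + 1) * B N (p + 1) :=
  stmt_8_general M k hk β hβ B hB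
end
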